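/- arXiv:2203.00248 — 4 statements merged into one kernel-verified Lean document; each statement's English description precedes it below -/
import Mathlib

section
/- Let l, k, m be integers with m ≥ 2k > 2l ≥ 0. Let h(x) = ∑_{j=0}^{m} b_j x^j ∈ ℤ[x] with b_0·b_m ≠ 0, and let p be a prime such that p ∤ b_m, p | b_j for all 0 ≤ j ≤ m−l−1, and for every j with 1 ≤ j ≤ m and b_j ≠ 0 one has k·(ν_p(b_0) − ν_p(b_j)) < j (equivalently, the rightmost edge of the Newton polygon of h with respect to p has slope < 1/k). Then for any integers a_0, a_1, …, a_m with p ∤ a_0·a_m, the polynomial f(x) = ∑_{j=0}^{m} a_j b_j x^j has no factor in ℚ[x] of degree d with l+1 ≤ d ≤ k. -/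
/-!
Let `g ∈ ℤ[X]` be a factor of `f` of degree `d` with `l < d ≤ k`; by Gauss's lemma any rational
factor yields one. Work in an algebraic closure of `ℚ_p`. Since the last edge of the Newton
polygon has slope `< 1/k`, the constant term of `f` strictly dominates `f(α)` whenever
`|α|^k ≤ 1/p`, so every root `α` of `f` has `|α|^k > 1/p`. As `p ∤ lc(g)`, `|g(0)|` is the product
of the `|α|` over the `d ≤ k` roots of `g`, whence `|g(0)|^k > p^{-d} ≥ p^{-k}` and `p ∤ g(0)`.
Modulo `p`, `f ≡ X^{m-l} u` with `deg u ≤ l`; the reduction of `g` has degree `d` and is coprime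
to `X`, so it divides `u`, forcing `d ≤ l`.
-/

open Polynomial Finset

namespace Polynomial

theorem coeff_sum_range_C_mul_X_pow {R : Type*} [Semiring R] (c : ℕ → R) (n i : ℕ) :
    (∑ j ∈ range n, C (c j) * X ^ j).coeff i = if i < n then c i else 0 := by
  simp only [finsetSum_coeff, coeff_C_mul_X_pow, sum_ite_eq, mem_range]

theorem natDegree_sum_range_C_mul_X_pow {R : Type*} [Semiring R] {c : ℕ → R} {m : ℕ}
    (hm : c m ≠ 0) : (∑ j ∈ range (m + 1), C (c j) * X ^ j).natDegree = m :=
  natDegree_eq_of_le_of_coeff_ne_zero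
    (natDegree_le_iff_coeff_eq_zero.mpr fun j hj => by
      rw [coeff_sum_range_C_mul_X_pow, if_neg (by omega)])
    (by rwa [coeff_sum_range_C_mul_X_pow, if_pos m.lt_succ_self])

theorem leadingCoeff_sum_range_C_mul_X_pow {R : Type*} [Semiring R] {c : ℕ → R} {m : ℕ}
    (hm : c m ≠ 0) : (∑ j ∈ range (m + 1), C (c j) * X ^ j).leadingCoeff = c m := by
  rw [leadingCoeff, natDegree_sum_range_C_mul_X_pow hm, coeff_sum_range_C_mul_X_pow,
    if_pos m.lt_succ_self]

theorem eval_ne_zero_of_norm_coeff_mul_pow_lt {K : Type*} [NormedField K] [IsUltrametricDist K]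
    {f : K[X]} {α : K} (h : ∀ j, 0 < j → ‖f.coeff j‖ * ‖α‖ ^ j < ‖f.coeff 0‖) :
    f.eval α ≠ 0 := by
  rw [eval_eq_sum_range, sum_range_succ', pow_zero, mul_one]
  obtain ⟨i, -, hi⟩ := IsUltrametricDist.exists_norm_finsetSum_le (range f.natDegree)
    fun i => f.coeff (i + 1) * α ^ (i + 1)
  have hlt := hi.trans_lt (by simpa only [norm_mul, norm_pow] using h (i + 1) i.succ_pos)
  intro h0
  rw [add_eq_zero_iff_eq_neg.mp h0, norm_neg] at hlt
  exact hlt.false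

theorem pow_natDegree_mul_norm_leadingCoeff_pow_lt {K : Type*} [NormedField K] [IsAlgClosed K]
    {g : K[X]} {c : ℝ} {k : ℕ} (hc : 0 < c) (hg : 0 < g.natDegree)
    (hroots : ∀ α ∈ g.roots, c < ‖α‖ ^ k) :
    c ^ g.natDegree * ‖g.leadingCoeff‖ ^ k < ‖g.coeff 0‖ ^ k := by
  have hsplit := IsAlgClosed.splits g
  have hg0 : g ≠ 0 := by rintro rfl; simp at hg
  have hroots0 : g.roots ≠ 0 := by
    rw [← Multiset.card_pos, ← hsplit.natDegree_eq_card_roots]; exact hg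
  have hprod : c ^ g.natDegree < ‖g.roots.prod‖ ^ k := by
    rw [hsplit.natDegree_eq_card_roots, ← Multiset.prod_replicate, ← Multiset.map_const',
      ← normHom_apply, map_multiset_prod, ← Multiset.prod_map_pow]
    exact Multiset.prod_map_lt_prod_map hroots0 _ _ (fun _ _ => hc) hroots
  rw [hsplit.coeff_zero_eq_leadingCoeff_mul_prod_roots, norm_mul, norm_mul, norm_pow, norm_neg,
    norm_one, one_pow, one_mul, mul_pow, mul_comm]
  exact mul_lt_mul_of_pos_left hprod (pow_pos (norm_pos_iff.mpr (leadingCoeff_ne_zero.mpr hg0)) k)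

theorem natDegree_add_le_of_dvd_of_coeff_eq_zero {F : Type*} [Field F] {f g : F[X]} {n : ℕ}
    (hgf : g ∣ f) (hf : f ≠ 0) (hcoeff : ∀ i < n, f.coeff i = 0) (hg0 : g.coeff 0 ≠ 0) :
    g.natDegree + n ≤ f.natDegree := by
  obtain ⟨u, rfl⟩ := X_pow_dvd_iff.mpr hcoeff
  have hu : u ≠ 0 := right_ne_zero_of_mul hf
  have hcop : IsCoprime g (X ^ n) :=
    ((irreducible_X.coprime_iff_not_dvd).mpr (by rwa [X_dvd_iff])).symm.pow_right
  rw [natDegree_mul (pow_ne_zero n X_ne_zero) hu, natDegree_X_pow, add_comm n]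
  exact Nat.add_le_add_right (natDegree_le_of_dvd (hcop.dvd_of_dvd_mul_left hgf) hu) n

theorem natDegree_add_le_of_dvd_of_prime_dvd_coeff {p : ℕ} [Fact p.Prime]
    {f g : ℤ[X]} {n : ℕ} (hgf : g ∣ f) (hf : ¬ (p : ℤ) ∣ f.leadingCoeff)
    (hcoeff : ∀ i < n, (p : ℤ) ∣ f.coeff i) (hg0 : ¬ (p : ℤ) ∣ g.coeff 0) :
    g.natDegree + n ≤ f.natDegree := by
  set φ := Int.castRingHom (ZMod p)
  have hφ : ∀ x : ℤ, φ x = 0 ↔ (p : ℤ) ∣ x := fun x => ZMod.intCast_zmod_eq_zero_iff_dvd x p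
  have hg : ¬ (p : ℤ) ∣ g.leadingCoeff := fun h => hf (h.trans (leadingCoeff_dvd_leadingCoeff hgf))
  have hfφ : φ f.leadingCoeff ≠ 0 := mt (hφ _).mp hf
  have hgφ : φ g.leadingCoeff ≠ 0 := mt (hφ _).mp hg
  have key := natDegree_add_le_of_dvd_of_coeff_eq_zero (map_dvd φ hgf)
    (leadingCoeff_ne_zero.mp (by rwa [leadingCoeff_map_of_leadingCoeff_ne_zero φ hfφ]))
    (fun i hi => by rw [coeff_map, hφ]; exact hcoeff i hi) (by rwa [coeff_map, Ne, hφ])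
  rwa [natDegree_map_of_leadingCoeff_ne_zero φ hfφ,
    natDegree_map_of_leadingCoeff_ne_zero φ hgφ] at key

theorem exists_dvd_natDegree_eq_of_dvd_map {R K : Type*} [CommRing R] [IsDomain R]
    [NormalizedGCDMonoid R] [Field K] [Algebra R K] [IsFractionRing R K] {f : R[X]} {q : K[X]}
    (hq : q ∣ f.map (algebraMap R K)) : ∃ g : R[X], g ∣ f ∧ g.natDegree = q.natDegree := by
  obtain ⟨s, hs, hN⟩ := IsLocalization.integerNormalization_spec (nonZeroDivisors R) q
  set N := IsLocalization.integerNormalization (nonZeroDivisors R) q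
  have hs0 : algebraMap R K s ≠ 0 :=
    IsFractionRing.to_map_ne_zero_of_mem_nonZeroDivisors (K := K) hs
  rw [← algebraMap_smul K s q, smul_eq_C_mul] at hN
  refine ⟨N.primPart, N.isPrimitive_primPart.dvd_of_fraction_map_dvd_fraction_map (K := K) ?_, ?_⟩
  · refine dvd_trans ?_ hq
    have := Polynomial.map_dvd (algebraMap R K) N.primPart_dvd
    rwa [hN, (isUnit_C.mpr (isUnit_iff_ne_zero.mpr hs0)).dvd_mul_left] at this
  · rw [natDegree_primPart, ← natDegree_map_eq_of_injective (IsFractionRing.injective R K), hN,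
      natDegree_C_mul hs0]

/-- The last (steepest) edge of the `p`-adic Newton polygon of `f` has slope `< 1 / k`. -/
def LastNewtonSlopeLt (p k : ℕ) (f : ℤ[X]) : Prop :=
  ∀ j, 0 < j → f.coeff j ≠ 0 →
    (k : ℤ) * ((padicValInt p (f.coeff 0) : ℤ) - padicValInt p (f.coeff j)) < j

theorem lastNewtonSlopeLt_sum_range_mul {p k m : ℕ} [Fact p.Prime] {a b : ℕ → ℤ}
    (ha0 : ¬ (p : ℤ) ∣ a 0) (hb0 : b 0 ≠ 0)
    (hslope : ∀ j, 1 ≤ j → j ≤ m → b j ≠ 0 →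
      (k : ℤ) * ((padicValInt p (b 0) : ℤ) - (padicValInt p (b j) : ℤ)) < j) :
    LastNewtonSlopeLt p k (∑ j ∈ range (m + 1), C (a j * b j) * X ^ j) := by
  intro j hj hj0
  simp only [coeff_sum_range_C_mul_X_pow] at hj0 ⊢
  have hjm : j < m + 1 := by by_contra h; exact hj0 (if_neg h)
  rw [if_pos hjm] at hj0 ⊢
  rw [if_pos m.succ_pos]
  have ha0' : a 0 ≠ 0 := fun h => ha0 (h ▸ dvd_zero _)
  rw [padicValInt.mul ha0' hb0, padicValInt.eq_zero_of_not_dvd ha0,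
    padicValInt.mul (left_ne_zero_of_mul hj0) (right_ne_zero_of_mul hj0)]
  have := hslope j hj (Nat.lt_succ_iff.mp hjm) (right_ne_zero_of_mul hj0)
  push_cast
  nlinarith

end Polynomial

theorem Nat.Prime.inv_cast_mem_Ioo {p : ℕ} (hp : p.Prime) : (p : ℝ)⁻¹ ∈ Set.Ioo 0 1 :=
  ⟨inv_pos.mpr (Nat.cast_pos.mpr hp.pos), inv_lt_one_of_one_lt₀ (Nat.one_lt_cast.mpr hp.one_lt)⟩

namespace PadicAlgCl

variable {p : ℕ} [Fact p.Prime]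

theorem norm_intCast (n : ℤ) : ‖(n : PadicAlgCl p)‖ = ‖(n : ℚ_[p])‖ := by
  rw [← norm_extends, map_intCast]

theorem norm_intCast_eq_pow {n : ℤ} (hn : n ≠ 0) :
    ‖(n : PadicAlgCl p)‖ = (p : ℝ)⁻¹ ^ padicValInt p n := by
  rw [norm_intCast, Padic.norm_eq_zpow_neg_valuation (by exact_mod_cast hn),
    Padic.valuation_intCast, zpow_neg, zpow_natCast, inv_pow]

theorem norm_intCast_eq_one_iff {n : ℤ} : ‖(n : PadicAlgCl p)‖ = 1 ↔ ¬ (p : ℤ) ∣ n := by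
  rw [norm_intCast, Padic.norm_intCast_eq_one_iff, isCoprime_comm,
    (Nat.prime_iff_prime_int.mp Fact.out).coprime_iff_not_dvd]

theorem inv_lt_norm_pow_of_isRoot {f : ℤ[X]} {k : ℕ} (h0 : f.coeff 0 ≠ 0)
    (hslope : LastNewtonSlopeLt p k f) {α : PadicAlgCl p}
    (hα : (f.map (Int.castRingHom (PadicAlgCl p))).IsRoot α) : (p : ℝ)⁻¹ < ‖α‖ ^ k := by
  by_contra! hα_small
  refine eval_ne_zero_of_norm_coeff_mul_pow_lt (fun j hj => ?_) hα
  obtain ⟨hπ0, hπ1⟩ := (Fact.out : p.Prime).inv_cast_mem_Ioo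
  simp only [coeff_map, eq_intCast]
  rw [norm_intCast_eq_pow h0]
  rcases eq_or_ne (f.coeff j) 0 with hj0 | hj0
  · simpa [hj0] using pow_pos hπ0 _
  rw [norm_intCast_eq_pow hj0]
  set ν₀ := padicValInt p (f.coeff 0)
  set νⱼ := padicValInt p (f.coeff j)
  have hexp : k * ν₀ < k * νⱼ + j := by
    have := hslope j hj hj0
    rw [mul_sub] at this
    zify
    linarith
  refine lt_of_pow_lt_pow_left₀ k (pow_nonneg hπ0.le _) ?_
  calc ((p : ℝ)⁻¹ ^ νⱼ * ‖α‖ ^ j) ^ k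
      = (p : ℝ)⁻¹ ^ (k * νⱼ) * (‖α‖ ^ k) ^ j := by ring
    _ ≤ (p : ℝ)⁻¹ ^ (k * νⱼ) * (p : ℝ)⁻¹ ^ j := by gcongr
    _ = (p : ℝ)⁻¹ ^ (k * νⱼ + j) := by ring
    _ < (p : ℝ)⁻¹ ^ (k * ν₀) := pow_lt_pow_right_of_lt_one₀ hπ0 hπ1 hexp
    _ = ((p : ℝ)⁻¹ ^ ν₀) ^ k := by ring

end PadicAlgCl

theorem Polynomial.LastNewtonSlopeLt.not_dvd_coeff_zero_of_dvd {p : ℕ} [Fact p.Prime]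
    {f g : ℤ[X]} {k : ℕ} (hslope : LastNewtonSlopeLt p k f) (h0 : f.coeff 0 ≠ 0) (hgf : g ∣ f)
    (hlc : ¬ (p : ℤ) ∣ g.leadingCoeff) (hg : 0 < g.natDegree) (hgk : g.natDegree ≤ k) :
    ¬ (p : ℤ) ∣ g.coeff 0 := by
  set φ := Int.castRingHom (PadicAlgCl p)
  have hφ : Function.Injective φ := Int.cast_injective
  obtain ⟨hπ0, hπ1⟩ := (Fact.out : p.Prime).inv_cast_mem_Ioo
  have hroots : ∀ α ∈ (g.map φ).roots, (p : ℝ)⁻¹ < ‖α‖ ^ k := fun α hα =>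
    PadicAlgCl.inv_lt_norm_pow_of_isRoot h0 hslope ((isRoot_of_mem_roots hα).dvd (map_dvd φ hgf))
  have key := pow_natDegree_mul_norm_leadingCoeff_pow_lt hπ0
    (by rwa [natDegree_map_eq_of_injective hφ]) hroots
  rw [natDegree_map_eq_of_injective hφ, leadingCoeff_map_of_injective hφ, coeff_map, eq_intCast,
    eq_intCast, PadicAlgCl.norm_intCast_eq_one_iff.mpr hlc, one_pow, mul_one,
    PadicAlgCl.norm_intCast] at key
  intro hdvd
  have hle : ‖((g.coeff 0 : ℤ) : ℚ_[p])‖ ≤ (p : ℝ)⁻¹ := by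
    simpa using (Padic.norm_int_le_pow_iff_dvd (g.coeff 0) 1).mpr (by simpa using hdvd)
  have := pow_le_pow_left₀ (norm_nonneg _) hle k
  have := pow_le_pow_of_le_one hπ0.le hπ1.le hgk
  linarith

theorem filaseta_newton_polygon_criterion_general (l k m : ℕ) (p : ℕ) (hp : p.Prime)
    (b : ℕ → ℤ) (hb : b 0 * b m ≠ 0)
    (hpbm : ¬ (p : ℤ) ∣ b m)
    (hpbj : ∀ j, j ≤ m - l - 1 → (p : ℤ) ∣ b j)
    (hslope : ∀ j, 1 ≤ j → j ≤ m → b j ≠ 0 →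
      (k : ℤ) * ((padicValInt p (b 0) : ℤ) - (padicValInt p (b j) : ℤ)) < j)
    (a : ℕ → ℤ) (ha : ¬ (p : ℤ) ∣ a 0 * a m) :
    ¬ ∃ q : ℚ[X], q ∣ (∑ j ∈ Finset.range (m + 1),
        Polynomial.C ((a j * b j : ℤ) : ℚ) * Polynomial.X ^ j) ∧
      l + 1 ≤ q.natDegree ∧ q.natDegree ≤ k := by
  rintro ⟨q, hqF, hlq, hqk⟩
  have : Fact p.Prime := ⟨hp⟩
  set F : ℤ[X] := ∑ j ∈ range (m + 1), C (a j * b j) * X ^ j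
  have hcoeff := coeff_sum_range_C_mul_X_pow (fun j => a j * b j) (m + 1)
  have hpa0 : ¬ (p : ℤ) ∣ a 0 := fun h => ha (h.mul_right _)
  have hpm : ¬ (p : ℤ) ∣ a m * b m := fun h =>
    ((Nat.prime_iff_prime_int.mp hp).dvd_or_dvd h).elim (fun h => ha (h.mul_left _)) hpbm
  have hm0 : a m * b m ≠ 0 := fun h => hpm (h ▸ dvd_zero _)
  have hlc : ¬ (p : ℤ) ∣ F.leadingCoeff := by rwa [leadingCoeff_sum_range_C_mul_X_pow hm0]
  have hb0 : b 0 ≠ 0 := left_ne_zero_of_mul hb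
  have hF0 : F.coeff 0 ≠ 0 := by
    rw [hcoeff, if_pos m.succ_pos]
    exact mul_ne_zero (fun h => hpa0 (h ▸ dvd_zero _)) hb0
  obtain ⟨g, hgF, hgq⟩ := exists_dvd_natDegree_eq_of_dvd_map (f := F) (K := ℚ)
    (by convert hqF; simp [F, Polynomial.map_sum])
  have hg0 : ¬ (p : ℤ) ∣ g.coeff 0 :=
    (lastNewtonSlopeLt_sum_range_mul hpa0 hb0 hslope).not_dvd_coeff_zero_of_dvd hF0 hgF
    (fun h => hlc (h.trans (leadingCoeff_dvd_leadingCoeff hgF))) (by omega) (by omega)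
  have hdeg := natDegree_add_le_of_dvd_of_prime_dvd_coeff (n := m - l) hgF hlc
    (fun i hi => by rw [hcoeff, if_pos (by omega)]; exact (hpbj i (by omega)).mul_left _) hg0
  rw [natDegree_sum_range_C_mul_X_pow hm0] at hdeg
  omega

theorem filaseta_newton_polygon_criterion (l k m : ℕ) (p : ℕ) (hp : p.Prime)
    (hm : 2 * k ≤ m) (hkl : l < k)
    (b : ℕ → ℤ) (hb : b 0 * b m ≠ 0)
    (hpbm : ¬ (p : ℤ) ∣ b m)
    (hpbj : ∀ j, j ≤ m - l - 1 → (p : ℤ) ∣ b j)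
    (hslope : ∀ j, 1 ≤ j → j ≤ m → b j ≠ 0 →
      (k : ℤ) * ((padicValInt p (b 0) : ℤ) - (padicValInt p (b j) : ℤ)) < j)
    (a : ℕ → ℤ) (ha : ¬ (p : ℤ) ∣ a 0 * a m) :
    ¬ ∃ q : ℚ[X], q ∣ (∑ j ∈ Finset.range (m + 1),
        Polynomial.C ((a j * b j : ℤ) : ℚ) * Polynomial.X ^ j) ∧
      l + 1 ≤ q.natDegree ∧ q.natDegree ≤ k :=
  filaseta_newton_polygon_criterion_general l k m p hp b hb hpbm hpbj hslope a ha
end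

section
/- Let n be a positive integer, a_0, a_1, …, a_n arbitrary integers with a_0·a_n ≠ 0, and set h(x) = ∑_{j=0}^{n} a_j·x^j/j! ∈ ℚ[x]. Assume h(x) has a factor in ℚ[x] of degree k with k ≥ 1, and suppose there exists a prime p > k such that p divides n(n−1)⋯(n−k+1). Then p divides a_0·a_n. -/
/-!
Suppose `p ∤ a₀ aₙ` and `h = q r` with `deg q = k`. For `c > 0` the `p`-adic Gauss norm
`‖g‖_c = max_j |g_j|_p c^j` is multiplicative, so a bound on the weighted coefficients of `h`
transfers to a comparison between coefficients of `q`. Since `|h_l|_p ≤ p^{v_p(l!)}`: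

* at `c = p^{-1/n}`, the multiple of `p` in `(n - k, n]` makes every weighted coefficient of `h`
  at most `c^m` times the leading one, with `m > deg r`; this forces `|q_0|_p < |lc q|_p`;
* at `c = p^{-(n-1)/(kn)}`, Legendre's bound `k v_p(l!) < l` (from `k < p`) makes the constant
  coefficient of `h` dominate; this forces `|q_0|_p ≥ c^k |lc q|_p > p^{-1} |lc q|_p`.

Both cannot hold, because `|·|_p` takes its values in `p^ℤ`.
-/

open Polynomial Nat Rat.AbsoluteValue

namespace Polynomial

theorem gaussNorm_le_of_forall {R F : Type*} [Semiring R] [FunLike F R ℝ] [ZeroHomClass F R ℝ]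
    {v : F} {c B : ℝ} {f : R[X]} (h : ∀ i, v (f.coeff i) * c ^ i ≤ B) :
    f.gaussNorm v c ≤ B := by
  obtain ⟨i, hi⟩ := f.exists_eq_gaussNorm v c
  exact hi ▸ h i

variable {R : Type*} [Ring R] {v : AbsoluteValue R ℝ} {c : ℝ} {q r : R[X]}

theorem abv_coeff_mul_coeff_le_of_forall (hna : IsNonarchimedean v) (hc : 0 < c) {B : ℝ}
    (hB : ∀ l, v ((q * r).coeff l) * c ^ l ≤ B) (i j : ℕ) :
    v (q.coeff i) * c ^ i * (v (r.coeff j) * c ^ j) ≤ B :=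
  calc _ ≤ q.gaussNorm v c * r.gaussNorm v c :=
        mul_le_mul (q.le_gaussNorm v hc.le i) (r.le_gaussNorm v hc.le j) (by positivity)
          (q.gaussNorm_nonneg v hc.le)
    _ = (q * r).gaussNorm v c := (gaussNorm_mul hna hc q r).symm
    _ ≤ B := gaussNorm_le_of_forall hB

theorem abv_coeff_mul_pow_le_coeff_zero (hna : IsNonarchimedean v) (hc : 0 < c)
    (hr : r.coeff 0 ≠ 0) (hB : ∀ l, v ((q * r).coeff l) * c ^ l ≤ v ((q * r).coeff 0)) (i : ℕ) :
    v (q.coeff i) * c ^ i ≤ v (q.coeff 0) := by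
  have key := abv_coeff_mul_coeff_le_of_forall hna hc hB i 0
  rw [mul_coeff_zero, map_mul, pow_zero, mul_one] at key
  exact le_of_mul_le_mul_right key (v.pos hr)

theorem abv_coeff_zero_lt_leadingCoeff [NoZeroDivisors R] (hna : IsNonarchimedean v)
    (hc0 : 0 < c) (hc1 : c < 1) (hq : q ≠ 0) (hr : r ≠ 0) {N : ℕ} (hN : r.natDegree < N)
    (hB : ∀ l, v ((q * r).coeff l) * c ^ l ≤ v (q * r).leadingCoeff * c ^ N) :
    v (q.coeff 0) < v q.leadingCoeff := by
  have key := abv_coeff_mul_coeff_le_of_forall hna hc0 hB 0 r.natDegree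
  rw [leadingCoeff_mul, map_mul, coeff_natDegree, pow_zero, mul_one] at key
  have hq' : 0 < v q.leadingCoeff := v.pos (leadingCoeff_ne_zero.mpr hq)
  have hr' : 0 < v r.leadingCoeff := v.pos (leadingCoeff_ne_zero.mpr hr)
  refine lt_of_mul_lt_mul_right (key.trans_lt ?_) (by positivity)
  calc v q.leadingCoeff * v r.leadingCoeff * c ^ N
      < v q.leadingCoeff * v r.leadingCoeff * c ^ r.natDegree :=
        mul_lt_mul_of_pos_left (pow_lt_pow_right_of_lt_one₀ hc0 hc1 hN) (mul_pos hq' hr')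
    _ = v q.leadingCoeff * (v r.leadingCoeff * c ^ r.natDegree) := by ring

end Polynomial

theorem Nat.factorial_mul_dvd_factorial {l m n : ℕ} (hlm : l < m) (hmn : m ≤ n) :
    l ! * m ∣ n ! :=
  calc l ! * m ∣ (m - 1)! * m := mul_dvd_mul_right (factorial_dvd_factorial (by omega)) m
    _ = m ! := by rw [mul_comm, mul_factorial_pred (by omega)]
    _ ∣ n ! := factorial_dvd_factorial hmn

theorem sub_one_mul_padicValNat_factorial_le (p : ℕ) [Fact p.Prime] (l : ℕ) :
    (p - 1) * padicValNat p l ! ≤ l - 1 := by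
  rcases Nat.eq_zero_or_pos l with rfl | hl
  · simp
  · have := sub_one_mul_padicValNat_factorial_lt_of_ne_zero p hl.ne'
    omega

theorem exists_pow_eq_inv_prime (p : ℕ) [Fact p.Prime] {N : ℕ} (hN : N ≠ 0) :
    ∃ t : ℝ, 0 < t ∧ t < 1 ∧ t ^ N = (p : ℝ)⁻¹ := by
  have hp : (1 : ℝ) < p := by exact_mod_cast (Fact.out : p.Prime).one_lt
  have hp0 : (0 : ℝ) < (p : ℝ)⁻¹ := inv_pos.mpr (by linarith)
  have hp1 : (p : ℝ)⁻¹ < 1 := inv_lt_one_of_one_lt₀ hp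
  exact ⟨(p : ℝ)⁻¹ ^ (N : ℝ)⁻¹, Real.rpow_pos_of_pos hp0 _,
    Real.rpow_lt_one hp0.le hp1 (by positivity), Real.rpow_inv_natCast_pow hp0.le hN⟩

namespace Rat.AbsoluteValue

variable {p : ℕ} [Fact p.Prime]

theorem isNonarchimedean_padic : IsNonarchimedean (padic p) := fun x y => by
  simpa only [padic_eq_padicNorm, Rat.cast_max] using
    (Rat.cast_le (K := ℝ)).mpr (padicNorm.nonarchimedean (p := p) (q := x) (r := y))

theorem padic_intCast_eq_one {a : ℤ} (h : ¬ (p : ℤ) ∣ a) : padic p a = 1 := by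
  rw [padic_eq_padicNorm, (padicNorm.int_eq_one_iff a).mpr h, Rat.cast_one]

theorem padic_natCast {N : ℕ} (hN : N ≠ 0) : padic p N = (p : ℝ)⁻¹ ^ padicValNat p N := by
  rw [padic_eq_padicNorm, padicNorm.eq_zpow_of_nonzero (by exact_mod_cast hN),
    padicValRat.of_nat, zpow_neg, zpow_natCast]
  push_cast
  rw [inv_pow]

theorem padic_le_of_dvd {a b : ℤ} (h : a ∣ b) : padic p b ≤ padic p a := by
  obtain ⟨e, rfl⟩ := h
  rw [Int.cast_mul, map_mul]
  exact mul_le_of_le_one_right ((padic p).nonneg _) (padic_le_one p e)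

theorem padic_le_inv_mul_of_lt {x y : ℚ} (h : padic p x < padic p y) :
    padic p x ≤ (p : ℝ)⁻¹ * padic p y := by
  have hy : y ≠ 0 := by rintro rfl; simpa using h.trans_le' ((padic p).nonneg x)
  by_cases hx : x = 0
  · simp only [hx, map_zero]; exact mul_nonneg (by positivity) ((padic p).nonneg _)
  have hp : (1 : ℝ) < p := by exact_mod_cast (Fact.out : p.Prime).one_lt
  obtain ⟨z, hz⟩ := padicNorm.values_discrete (p := p) (div_ne_zero hx hy)
  have hxy : padic p (x / y) = (p : ℝ) ^ (-z) := by
    rw [padic_eq_padicNorm, hz]; push_cast; rfl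
  have hz1 : -z ≤ -1 := by
    have : (p : ℝ) ^ (-z) < 1 := by rwa [← hxy, map_div₀, div_lt_one ((padic p).pos hy)]
    have := (zpow_lt_one_iff_right₀ hp).mp this
    omega
  have hle : padic p (x / y) ≤ (p : ℝ)⁻¹ := by
    rw [hxy, ← zpow_neg_one]; exact zpow_le_zpow_right₀ hp.le hz1
  rwa [map_div₀, div_le_iff₀ ((padic p).pos hy)] at hle

theorem padic_factorial_mul_pow_le {m n l : ℕ} (hm : p ∣ m) (hmn : m ≤ n) (hl : l ≤ n) {c : ℝ}
    (hc0 : 0 ≤ c) (hc1 : c ≤ 1) (hcm : (p : ℝ)⁻¹ ≤ c ^ m) :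
    padic p (n ! : ℚ) * c ^ l ≤ padic p (l ! : ℚ) * c ^ m := by
  rcases lt_or_ge l m with hlm | hml
  · have hdvd : ((l ! * p : ℕ) : ℤ) ∣ (n ! : ℕ) := Int.natCast_dvd_natCast.mpr
      ((mul_dvd_mul_left _ hm).trans (factorial_mul_dvd_factorial hlm hmn))
    have hn : padic p (n ! : ℚ) ≤ padic p (l ! : ℚ) * (p : ℝ)⁻¹ := by
      simpa [padic_eq_padicNorm, padicNorm.padicNorm_p_of_prime] using
        padic_le_of_dvd (p := p) hdvd
    calc padic p (n ! : ℚ) * c ^ l ≤ padic p (l ! : ℚ) * (p : ℝ)⁻¹ * 1 :=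
          mul_le_mul hn (pow_le_one₀ hc0 hc1) (by positivity) (by positivity)
      _ ≤ padic p (l ! : ℚ) * c ^ m := by
          rw [mul_one]; exact mul_le_mul_of_nonneg_left hcm ((padic p).nonneg _)
  · have hn : padic p (n ! : ℚ) ≤ padic p (l ! : ℚ) := by
      simpa using
        padic_le_of_dvd (p := p) (Int.natCast_dvd_natCast.mpr (factorial_dvd_factorial hl))
    exact mul_le_mul hn (pow_le_pow_of_le_one hc0 hc1 hml) (by positivity) ((padic p).nonneg _)

theorem pow_le_padic_factorial {k n l : ℕ} (hk : k < p) (hl : l ≤ n) {t : ℝ} (ht0 : 0 ≤ t)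
    (ht1 : t ≤ 1) (ht : t ^ (k * n) = (p : ℝ)⁻¹) :
    (t ^ (n - 1)) ^ l ≤ padic p (l ! : ℚ) := by
  have hv : k * padicValNat p l ! ≤ l - 1 :=
    (Nat.mul_le_mul_right _ (by omega)).trans (sub_one_mul_padicValNat_factorial_le p l)
  have hexp : k * n * padicValNat p l ! ≤ (n - 1) * l :=
    calc k * n * padicValNat p l ! = n * (k * padicValNat p l !) := by ring
      _ ≤ n * (l - 1) := Nat.mul_le_mul_left n hv
      _ ≤ (n - 1) * l := by rw [Nat.mul_sub_one, Nat.sub_one_mul, mul_comm]; omega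
  rw [padic_natCast (factorial_ne_zero l), ← ht, ← pow_mul, ← pow_mul]
  exact pow_le_pow_of_le_one ht0 ht1 hexp

end Rat.AbsoluteValue

noncomputable def truncatedExp (a : ℕ → ℤ) (n : ℕ) : ℚ[X] :=
  ∑ j ∈ Finset.range (n + 1), C ((a j : ℚ) / (j.factorial : ℚ)) * X ^ j

section truncatedExp

variable {a : ℕ → ℤ} {n : ℕ}

theorem coeff_truncatedExp (l : ℕ) :
    (truncatedExp a n).coeff l = if l ≤ n then (a l : ℚ) / l ! else 0 := by
  simp only [truncatedExp, finsetSum_coeff, coeff_C_mul, coeff_X_pow, mul_ite, mul_one, mul_zero,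
    Finset.sum_ite_eq, Finset.mem_range, Nat.lt_succ_iff]

theorem coeff_truncatedExp_self_ne_zero (ha : a n ≠ 0) : (truncatedExp a n).coeff n ≠ 0 := by
  simpa [coeff_truncatedExp, factorial_ne_zero] using ha

theorem truncatedExp_ne_zero (ha : a n ≠ 0) : truncatedExp a n ≠ 0 :=
  ne_of_apply_ne (coeff · n) (coeff_truncatedExp_self_ne_zero ha)

theorem natDegree_truncatedExp (ha : a n ≠ 0) : (truncatedExp a n).natDegree = n := by
  refine natDegree_eq_of_le_of_coeff_ne_zero ?_ (coeff_truncatedExp_self_ne_zero ha)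
  rw [natDegree_le_iff_coeff_eq_zero]
  intro l hl
  simp [coeff_truncatedExp, not_le.mpr (by exact_mod_cast hl : n < l)]

theorem natDegree_add_natDegree_of_mul_eq_truncatedExp {q r : ℚ[X]}
    (hqr : q * r = truncatedExp a n) (ha : a n ≠ 0) : q.natDegree + r.natDegree = n := by
  have h0 : q * r ≠ 0 := hqr ▸ truncatedExp_ne_zero ha
  rw [← natDegree_mul (left_ne_zero_of_mul h0) (right_ne_zero_of_mul h0), hqr,
    natDegree_truncatedExp ha]

variable {p : ℕ} [Fact p.Prime]

theorem padic_coeff_truncatedExp_mul_le (l : ℕ) :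
    padic p ((truncatedExp a n).coeff l) * padic p (l ! : ℚ) ≤ 1 := by
  rw [coeff_truncatedExp]
  split_ifs
  · rw [map_div₀, div_mul_cancel₀ _ ((padic p).ne_zero (by positivity))]
    exact padic_le_one p _
  · simp

theorem padic_coeff_truncatedExp_mul_eq_one {l : ℕ} (hl : l ≤ n) (ha : ¬ (p : ℤ) ∣ a l) :
    padic p ((truncatedExp a n).coeff l) * padic p (l ! : ℚ) = 1 := by
  rw [coeff_truncatedExp, if_pos hl, map_div₀,
    div_mul_cancel₀ _ ((padic p).ne_zero (by positivity))]
  exact padic_intCast_eq_one ha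

theorem padic_coeff_truncatedExp_mul_pow_le_leadingCoeff {m : ℕ} (hpn : ¬ (p : ℤ) ∣ a n)
    (hm : p ∣ m) (hmn : m ≤ n) {c : ℝ} (hc0 : 0 ≤ c) (hc1 : c ≤ 1) (hcm : (p : ℝ)⁻¹ ≤ c ^ m)
    (l : ℕ) :
    padic p ((truncatedExp a n).coeff l) * c ^ l ≤
      padic p (truncatedExp a n).leadingCoeff * c ^ m := by
  have hlc : padic p (truncatedExp a n).leadingCoeff * padic p (n ! : ℚ) = 1 := by
    rw [leadingCoeff, natDegree_truncatedExp (by rintro h; simp [h] at hpn)]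
    exact padic_coeff_truncatedExp_mul_eq_one le_rfl hpn
  by_cases hl : l ≤ n
  · have hfac := padic_factorial_mul_pow_le hm hmn hl hc0 hc1 hcm
    have hl! : 0 < padic p (l ! : ℚ) := (padic p).pos (by positivity)
    have hn! : 0 < padic p (n ! : ℚ) := (padic p).pos (by positivity)
    refine le_of_mul_le_mul_right ?_ (mul_pos hl! hn!)
    calc _ = padic p ((truncatedExp a n).coeff l) * padic p (l ! : ℚ) *
          (c ^ l * padic p (n ! : ℚ)) := by ring
      _ ≤ 1 * (c ^ l * padic p (n ! : ℚ)) := by gcongr; exact padic_coeff_truncatedExp_mul_le l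
      _ ≤ padic p (l ! : ℚ) * c ^ m := by linarith
      _ = _ := by linear_combination (-(padic p (l ! : ℚ) * c ^ m)) * hlc
  · simp only [coeff_truncatedExp, if_neg hl, map_zero, zero_mul]
    exact mul_nonneg ((padic p).nonneg _) (pow_nonneg hc0 m)

theorem padic_coeff_truncatedExp_mul_pow_le_coeff_zero {k : ℕ} (hp0 : ¬ (p : ℤ) ∣ a 0)
    (hk : k < p) {t : ℝ} (ht0 : 0 ≤ t) (ht1 : t ≤ 1) (ht : t ^ (k * n) = (p : ℝ)⁻¹) (l : ℕ) :
    padic p ((truncatedExp a n).coeff l) * (t ^ (n - 1)) ^ l ≤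
      padic p ((truncatedExp a n).coeff 0) := by
  have h0 := padic_coeff_truncatedExp_mul_eq_one (n := n) (zero_le n) hp0
  rw [factorial_zero, cast_one, map_one, mul_one] at h0
  rw [h0]
  by_cases hl : l ≤ n
  · calc _ ≤ padic p ((truncatedExp a n).coeff l) * padic p (l ! : ℚ) :=
          mul_le_mul_of_nonneg_left (pow_le_padic_factorial hk hl ht0 ht1 ht) ((padic p).nonneg _)
      _ ≤ 1 := padic_coeff_truncatedExp_mul_le l
  · simp [coeff_truncatedExp, hl]

variable {q r : ℚ[X]}

theorem padic_coeff_zero_lt_leadingCoeff_of_mul_eq_truncatedExp (hqr : q * r = truncatedExp a n)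
    (hpn : ¬ (p : ℤ) ∣ a n) {m : ℕ} (hm : p ∣ m) (hmn : m ≤ n) (hrm : r.natDegree < m) :
    padic p (q.coeff 0) < padic p q.leadingCoeff := by
  have hqr0 : q * r ≠ 0 := hqr ▸ truncatedExp_ne_zero (by rintro h; simp [h] at hpn)
  obtain ⟨c, hc0, hc1, hc⟩ := exists_pow_eq_inv_prime p (N := n) (by omega)
  refine abv_coeff_zero_lt_leadingCoeff isNonarchimedean_padic hc0 hc1
    (left_ne_zero_of_mul hqr0) (right_ne_zero_of_mul hqr0) hrm fun l => ?_
  rw [hqr]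
  exact padic_coeff_truncatedExp_mul_pow_le_leadingCoeff hpn hm hmn hc0.le hc1.le
    (hc ▸ pow_le_pow_of_le_one hc0.le hc1.le hmn) l

theorem inv_mul_padic_leadingCoeff_lt_coeff_zero_of_mul_eq_truncatedExp
    (hqr : q * r = truncatedExp a n) (hp0 : ¬ (p : ℤ) ∣ a 0) (hk0 : 0 < q.natDegree)
    (hkn : q.natDegree ≤ n) (hkp : q.natDegree < p) :
    (p : ℝ)⁻¹ * padic p q.leadingCoeff < padic p (q.coeff 0) := by
  set k := q.natDegree
  have hr0 : r.coeff 0 ≠ 0 := by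
    refine right_ne_zero_of_mul (a := q.coeff 0) ?_
    rw [← mul_coeff_zero, hqr, coeff_truncatedExp, if_pos (zero_le n)]
    simpa using fun h => by simp [h] at hp0
  obtain ⟨t, ht0, ht1, ht⟩ :=
    exists_pow_eq_inv_prime p (N := k * n) (Nat.mul_ne_zero (by omega) (by omega))
  have hle : padic p q.leadingCoeff * (t ^ (n - 1)) ^ k ≤ padic p (q.coeff 0) := by
    refine abv_coeff_mul_pow_le_coeff_zero isNonarchimedean_padic (by positivity) hr0
      (fun l => ?_) k
    rw [hqr]
    exact padic_coeff_truncatedExp_mul_pow_le_coeff_zero hp0 hkp ht0.le ht1.le ht l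
  have hpt : (p : ℝ)⁻¹ < (t ^ (n - 1)) ^ k := by
    rw [← ht, ← pow_mul, mul_comm k n]
    exact pow_lt_pow_right_of_lt_one₀ ht0 ht1 (Nat.mul_lt_mul_of_pos_right (by omega) hk0)
  have hlc : 0 < padic p q.leadingCoeff :=
    (padic p).pos (leadingCoeff_ne_zero.mpr (ne_zero_of_natDegree_gt hk0))
  calc (p : ℝ)⁻¹ * padic p q.leadingCoeff < (t ^ (n - 1)) ^ k * padic p q.leadingCoeff :=
        mul_lt_mul_of_pos_right hpt hlc
    _ ≤ padic p (q.coeff 0) := by rwa [mul_comm]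

end truncatedExp

theorem shorey_tijdeman_lemma_general (n k : ℕ) (a : ℕ → ℤ) (hk : 1 ≤ k)
    (hfac : ∃ q : ℚ[X], q.natDegree = k ∧
      q ∣ ∑ j ∈ Finset.range (n + 1),
        Polynomial.C ((a j : ℚ) / (j.factorial : ℚ)) * Polynomial.X ^ j)
    (p : ℕ) (hp : p.Prime) (hpk : k < p)
    (hpdvd : (p : ℤ) ∣ ∏ i ∈ Finset.range k, ((n : ℤ) - (i : ℤ))) :
    (p : ℤ) ∣ a 0 * a n := by
  have := Fact.mk hp
  by_contra hpa
  have hp0 : ¬ (p : ℤ) ∣ a 0 := fun h => hpa (h.mul_right _)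
  have hpn : ¬ (p : ℤ) ∣ a n := fun h => hpa (h.mul_left _)
  obtain ⟨q, rfl, r, hqr⟩ := hfac
  replace hqr : q * r = truncatedExp a n := hqr.symm
  have hdeg := natDegree_add_natDegree_of_mul_eq_truncatedExp hqr (by rintro h; simp [h] at hpn)
  obtain ⟨i, hi, hpi⟩ := (Nat.prime_iff_prime_int.mp hp).exists_mem_finset_dvd hpdvd
  rw [Finset.mem_range] at hi
  have hpm : p ∣ n - i := Int.natCast_dvd_natCast.mp (by rwa [Nat.cast_sub (by omega)])
  have hlt := padic_coeff_zero_lt_leadingCoeff_of_mul_eq_truncatedExp hqr hpn hpm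
    (Nat.sub_le n i) (by omega)
  have hgt := inv_mul_padic_leadingCoeff_lt_coeff_zero_of_mul_eq_truncatedExp hqr hp0 hk
    (by omega) hpk
  exact (padic_le_inv_mul_of_lt hlt).not_gt hgt

theorem shorey_tijdeman_lemma (n k : ℕ) (hn : 1 ≤ n) (a : ℕ → ℤ)
    (ha : a 0 * a n ≠ 0) (hk : 1 ≤ k)
    (hfac : ∃ q : ℚ[X], q.natDegree = k ∧
      q ∣ ∑ j ∈ Finset.range (n + 1),
        Polynomial.C ((a j : ℚ) / (j.factorial : ℚ)) * Polynomial.X ^ j)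
    (p : ℕ) (hp : p.Prime) (hpk : k < p)
    (hpdvd : (p : ℤ) ∣ ∏ i ∈ Finset.range k, ((n : ℤ) - (i : ℤ))) :
    (p : ℤ) ∣ a 0 * a n :=
  shorey_tijdeman_lemma_general n k a hk hfac p hp hpk hpdvd
end

section
/- Let n be a positive integer and s an integer with s ≥ 9. Assume that g₁(x) = g₁(x,n,s) is the product of a polynomial of degree 1 and an irreducible polynomial in ℚ[x]. Let p be a prime dividing n with s < p². Then ν_p(n) = 1, and the unique integer d with 1 ≤ d < p and d ≡ n/p (mod p) satisfies d + ⌊s/p⌋ ≥ p. -/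
/-!
A linear factor gives a rational root of `g1 n s`, and this root is an integer `r` because
`g1 n s` is the image of a monic integer polynomial. Its non-leading coefficients
`n!/j! · C(n+s-j, n-j)` are all divisible by `n`, hence by `p`, so `p ∣ r`. With `K = ν_p(n!)`,
the term of degree `j ≥ 1` evaluated at `r` has valuation at least `K - ν_p(j!) + j > K`, so
`p^(K+1)` divides the constant term `n! · C(n+s, s)`, i.e. `p ∣ C(n+s, s)`. Since `s < p²`,
Lucas' theorem turns this into a carry in the lowest base-`p` digit when adding `n/p` and
`⌊s/p⌋`: `p ≤ (n/p mod p) + ⌊s/p⌋`. As `⌊s/p⌋ < p`, the digit `n/p mod p` is nonzero, so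
`ν_p(n) = 1`, and this digit is the `d` of the statement.
-/

open Polynomial Finset

/-- g₁(x,n,s) = n!·∑_{j=0}^{n} C(n+s−j, n−j)·x^j/j!, as a polynomial over ℚ. -/
noncomputable def g1 (n s : ℕ) : ℚ[X] :=
  (n.factorial : ℚ[X]) *
    ∑ j ∈ Finset.range (n + 1),
      Polynomial.C (((n + s - j).choose (n - j) : ℚ) / (j.factorial : ℚ)) * Polynomial.X ^ j

open Nat

theorem Polynomial.Monic.exists_intCast_root {f : ℤ[X]} (hf : f.Monic) {x : ℚ}
    (hx : (f.map (Int.castRingHom ℚ)).IsRoot x) : ∃ r : ℤ, f.IsRoot r := by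
  obtain ⟨r, rfl⟩ := isInteger_of_is_root_of_monic (K := ℚ) hf
    (by rwa [aeval_def, eval₂_eq_eval_map])
  refine ⟨r, Int.cast_injective (α := ℚ) ?_⟩
  simpa [eval_intCast_map] using hx.eq_zero

theorem Polynomial.Monic.dvd_of_isRoot_of_forall_dvd_coeff {R : Type*} [CommRing R] {f : R[X]}
    (hf : f.Monic) {p r : R} (hp : Prime p) (hcoeff : ∀ j < f.natDegree, p ∣ f.coeff j)
    (hr : f.IsRoot r) : p ∣ r := by
  have hEis : f.IsWeaklyEisensteinAt (Ideal.span {p}) :=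
    ⟨fun hj ↦ Ideal.mem_span_singleton.mpr (hcoeff _ hj)⟩
  exact hp.dvd_of_dvd_pow <| Ideal.mem_span_singleton.mp <|
    hEis.pow_natDegree_le_of_root_of_monic_mem hr hf _ le_rfl

theorem Polynomial.dvd_coeff_zero_of_eval_mul_eq_zero {R : Type*} [CommRing R] (f : R[X])
    {q p t : R} (hroot : f.eval (p * t) = 0) (hcoeff : ∀ j, q ∣ f.coeff (j + 1) * p ^ (j + 1)) :
    q ∣ f.coeff 0 := by
  rw [eval_eq_sum_range, sum_range_succ', pow_zero, mul_one, add_eq_zero_iff_neg_eq] at hroot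
  rw [← hroot, dvd_neg]
  exact dvd_sum fun j _ ↦ by rw [mul_pow, ← mul_assoc]; exact (hcoeff j).mul_right _

theorem pow_succ_padicValNat_factorial_dvd_div_mul_pow {p n j : ℕ} [Fact p.Prime] (hj0 : j ≠ 0)
    (hjn : j ≤ n) : p ^ (padicValNat p n ! + 1) ∣ n ! / j ! * p ^ j := by
  have hdvd := factorial_dvd_factorial hjn
  have hne : n ! / j ! ≠ 0 := (Nat.div_pos (factorial_le hjn) (factorial_pos j)).ne'
  have hpj : p ^ j ≠ 0 := pow_ne_zero _ (Fact.out : p.Prime).ne_zero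
  rw [padicValNat_dvd_iff_le (mul_ne_zero hne hpj), padicValNat.mul hne hpj,
    padicValNat.prime_pow, padicValNat.div_of_dvd hdvd]
  have := padicValNat_factorial_lt_of_ne_zero p hj0
  have := (padicValNat_dvd_iff_le (factorial_ne_zero n)).mp
    ((pow_padicValNat_dvd (p := p)).trans hdvd)
  omega

theorem Nat.Prime.le_mod_add_of_dvd_choose_add {p m a : ℕ} (hp : p.Prime) (ha : a < p)
    (h : p ∣ (m + a).choose a) : p ≤ m % p + a := by
  have := Fact.mk hp
  by_contra! hlt
  have hmod : (m + a) % p = m % p + a := by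
    rw [Nat.add_mod, Nat.mod_eq_of_lt ha, Nat.mod_eq_of_lt hlt]
  have hlucas := Choose.choose_modEq_choose_mod_mul_choose_div_nat (n := m + a) (k := a) (p := p)
  rw [Nat.div_eq_of_lt ha, Nat.choose_zero_right, mul_one, Nat.mod_eq_of_lt ha, hmod] at hlucas
  exact hp.one_lt.ne' (Nat.Coprime.eq_one_of_dvd (hp.coprime_choose_of_lt hlt (by omega))
    ((hlucas.dvd_iff dvd_rfl).mp h))

theorem Nat.Prime.le_div_mod_add_div_of_dvd_choose_add {p n s : ℕ} (hp : p.Prime) (hpn : p ∣ n)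
    (hsp : s < p ^ 2) (h : p ∣ (n + s).choose s) : p ≤ n / p % p + s / p := by
  have := Fact.mk hp
  refine hp.le_mod_add_of_dvd_choose_add (Nat.div_lt_of_lt_mul (by rwa [← sq])) ?_
  have hlucas := Choose.choose_modEq_choose_mod_mul_choose_div_nat (n := n + s) (k := s) (p := p)
  obtain ⟨m, rfl⟩ := hpn
  rw [Nat.mul_add_mod, Nat.choose_self, one_mul, Nat.mul_add_div hp.pos] at hlucas
  rwa [Nat.mul_div_cancel_left _ hp.pos, ← hlucas.dvd_iff dvd_rfl]

theorem padicValNat_eq_one_of_not_dvd_div {p n : ℕ} (hp : p.Prime) (hpn : p ∣ n)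
    (hnp : ¬ p ∣ n / p) : padicValNat p n = 1 := by
  have := Fact.mk hp
  obtain ⟨m, rfl⟩ := hpn
  rw [Nat.mul_div_cancel_left _ hp.pos] at hnp
  rw [padicValNat.mul hp.ne_zero (by rintro rfl; exact hnp (dvd_zero p)),
    padicValNat.self hp.one_lt, padicValNat.eq_zero_of_not_dvd hnp]

def g1Coeff (n s j : ℕ) : ℕ := n ! / j ! * (n + s - j).choose (n - j)

noncomputable def g1Int (n s : ℕ) : ℤ[X] := ∑ j ∈ range (n + 1), C (g1Coeff n s j : ℤ) * X ^ j

theorem map_g1Int (n s : ℕ) : (g1Int n s).map (Int.castRingHom ℚ) = g1 n s := by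
  rw [g1Int, g1, Polynomial.map_sum, mul_sum, ← C_eq_natCast]
  refine sum_congr rfl fun j hj ↦ ?_
  have hj : j ! ∣ n ! := factorial_dvd_factorial (Nat.lt_succ_iff.mp (mem_range.mp hj))
  rw [Polynomial.map_mul, map_C, Polynomial.map_pow, map_X, ← mul_assoc, ← C_mul, g1Coeff,
    eq_intCast, Int.cast_natCast, Nat.cast_mul, Nat.cast_div hj (by positivity), mul_comm_div]

theorem coeff_g1Int {n j : ℕ} (s : ℕ) (hj : j ≤ n) : (g1Int n s).coeff j = g1Coeff n s j := by
  simp [g1Int, Nat.lt_succ_iff.mpr hj]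

theorem natDegree_g1Int_le (n s : ℕ) : (g1Int n s).natDegree ≤ n :=
  natDegree_sum_le_of_forall_le _ _ fun j hj ↦
    (natDegree_C_mul_X_pow_le _ j).trans (Nat.lt_succ_iff.mp (mem_range.mp hj))

theorem monic_g1Int (n s : ℕ) : (g1Int n s).Monic := by
  refine monic_of_natDegree_le_of_coeff_eq_one n (natDegree_g1Int_le n s) ?_
  simp [coeff_g1Int s le_rfl, g1Coeff, Nat.div_self (factorial_pos n)]

theorem g1Coeff_zero (n s : ℕ) : g1Coeff n s 0 = n ! * (n + s).choose s := by
  simp [g1Coeff, Nat.choose_symm_add (a := n)]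

theorem dvd_g1Coeff {n j : ℕ} (s : ℕ) (hj : j < n) : n ∣ g1Coeff n s j := by
  obtain ⟨m, rfl⟩ := Nat.exists_eq_add_one_of_ne_zero (by omega : n ≠ 0)
  rw [g1Coeff, factorial_succ, Nat.mul_div_assoc _ (factorial_dvd_factorial (by omega)),
    mul_assoc]
  exact dvd_mul_right _ _

theorem exists_isRoot_g1Int_of_natDegree_eq_one_dvd {n s : ℕ} {l : ℚ[X]} (hl : l.natDegree = 1)
    (hdvd : l ∣ g1 n s) : ∃ r : ℤ, (g1Int n s).IsRoot r := by
  obtain ⟨x, hx⟩ :=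
    exists_root_of_degree_eq_one ((degree_eq_iff_natDegree_eq_of_pos one_pos).mpr hl)
  refine (monic_g1Int n s).exists_intCast_root (x := x) ?_
  rw [map_g1Int]
  exact hx.dvd hdvd

theorem prime_dvd_choose_of_isRoot_g1Int {p n s : ℕ} (hp : p.Prime) (hpn : p ∣ n) {r : ℤ}
    (hr : (g1Int n s).IsRoot r) : p ∣ (n + s).choose s := by
  have := Fact.mk hp
  obtain ⟨t, rfl⟩ : (p : ℤ) ∣ r := by
    refine (monic_g1Int n s).dvd_of_isRoot_of_forall_dvd_coeff (Nat.prime_iff_prime_int.mp hp)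
      (fun j hj ↦ ?_) hr
    have hjn := hj.trans_le (natDegree_g1Int_le n s)
    rw [coeff_g1Int s hjn.le]
    exact Int.natCast_dvd_natCast.mpr (hpn.trans (dvd_g1Coeff s hjn))
  have hcoeff (j : ℕ) :
      (p : ℤ) ^ (padicValNat p n ! + 1) ∣ (g1Int n s).coeff (j + 1) * p ^ (j + 1) := by
    rcases le_or_gt (j + 1) n with hjn | hjn
    · rw [coeff_g1Int s hjn, g1Coeff, Nat.cast_mul, mul_right_comm]
      exact_mod_cast
        (pow_succ_padicValNat_factorial_dvd_div_mul_pow j.succ_ne_zero hjn).mul_right _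
    · rw [coeff_eq_zero_of_natDegree_lt ((natDegree_g1Int_le n s).trans_lt hjn), zero_mul]
      exact dvd_zero _
  have h0 := (g1Int n s).dvd_coeff_zero_of_eval_mul_eq_zero hr hcoeff
  rw [coeff_g1Int s n.zero_le, g1Coeff_zero] at h0
  have hne : (n + s).choose s ≠ 0 := (Nat.choose_pos (Nat.le_add_left s n)).ne'
  have h0' : p ^ (padicValNat p n ! + 1) ∣ n ! * (n + s).choose s := by exact_mod_cast h0
  rw [padicValNat_dvd_iff_le (mul_ne_zero (factorial_ne_zero n) hne),
    padicValNat.mul (factorial_ne_zero n) hne] at h0'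
  exact dvd_of_one_le_padicValNat (by omega)

theorem g1_linear_factor_divisor_condition_general (n s : ℕ)
    (hfac : ∃ l q : ℚ[X], l.natDegree = 1 ∧ Irreducible q ∧ g1 n s = l * q)
    (p : ℕ) (hp : p.Prime) (hpn : p ∣ n) (hsp : s < p ^ 2) :
    padicValNat p n = 1 ∧
      ∀ d : ℕ, 1 ≤ d → d < p → (d : ZMod p) = ((n / p : ℕ) : ZMod p) →
        p ≤ d + s / p := by
  obtain ⟨l, q, hl, -, hlq⟩ := hfac
  obtain ⟨r, hr⟩ := exists_isRoot_g1Int_of_natDegree_eq_one_dvd hl (Dvd.intro q hlq.symm)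
  have hcarry := hp.le_div_mod_add_div_of_dvd_choose_add hpn hsp
    (prime_dvd_choose_of_isRoot_g1Int hp hpn hr)
  have hsp' : s / p < p := Nat.div_lt_of_lt_mul (by rwa [← sq])
  have hnp : ¬ p ∣ n / p := fun h ↦ by
    rw [Nat.mod_eq_zero_of_dvd h] at hcarry
    omega
  refine ⟨padicValNat_eq_one_of_not_dvd_div hp hpn hnp, fun d _ hdp hd ↦ ?_⟩
  rwa [← Nat.mod_eq_of_lt hdp, (ZMod.natCast_eq_natCast_iff' d (n / p) p).mp hd]

theorem g1_linear_factor_divisor_condition (n s : ℕ) (hn : 1 ≤ n) (hs : 9 ≤ s)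
    (hfac : ∃ l q : ℚ[X], l.natDegree = 1 ∧ Irreducible q ∧ g1 n s = l * q)
    (p : ℕ) (hp : p.Prime) (hpn : p ∣ n) (hsp : s < p ^ 2) :
    padicValNat p n = 1 ∧
      ∀ d : ℕ, 1 ≤ d → d < p → (d : ZMod p) = ((n / p : ℕ) : ZMod p) →
        p ≤ d + s / p :=
  g1_linear_factor_divisor_condition_general n s hfac p hp hpn hsp
end

section
/- Let p be a prime, D a positive integer with gcd(D,p) = 1, and set n = pD. Let s be a non-negative integer written as s = p·s₁ + s₀ with 0 ≤ s₀ < p and 0 ≤ s₁ < p. Then ν_p(C(n+s, s)) = ν_p(C(D+s₁, s₁)). -/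
/-!
By Legendre's formula, `(p - 1) · ν_p(C(m + k, k))` is the digit-sum defect
`S_p(k) + S_p(m) - S_p(m + k)`. Multiplying `m = D` and `k = s₁` by `p` and adding the
digit `s₀ < p` to `k` changes `S_p(k)` and `S_p(m + k)` by `s₀` each and leaves `S_p(m)`
alone, so the defect, and hence the valuation, is unchanged.
-/

namespace Nat

theorem digits_sum_add_mul {b : ℕ} (hb : 1 < b) {x : ℕ} (hx : x < b) (y : ℕ) :
    (b.digits (x + b * y)).sum = x + (b.digits y).sum := by
  by_cases hxy : x = 0 ∧ y = 0
  · simp [hxy.1, hxy.2]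
  · rw [digits_add b hb x y hx (not_and_or.mp hxy), List.sum_cons]

theorem padicValNat_choose_mul_add_mul_add {p : ℕ} (hp : p.Prime) (m k : ℕ) {r : ℕ} (hr : r < p) :
    padicValNat p ((p * m + (r + p * k)).choose (r + p * k)) =
      padicValNat p ((m + k).choose k) := by
  have : Fact p.Prime := ⟨hp⟩
  have hp1 := hp.one_lt
  have hsum : p * m + (r + p * k) = r + p * (m + k) := by ring
  have hpm : (p.digits (p * m)).sum = (p.digits m).sum := by
    simpa using digits_sum_add_mul hp1 hp.pos m
  apply Nat.eq_of_mul_eq_mul_left (Nat.sub_pos_of_lt hp1)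
  rw [sub_one_mul_padicValNat_choose_eq_sub_sum_digits',
    sub_one_mul_padicValNat_choose_eq_sub_sum_digits', hsum, hpm,
    digits_sum_add_mul hp1 hr, digits_sum_add_mul hp1 hr]
  omega

end Nat

theorem padicValNat_choose_reduction_general (p : ℕ) (hp : p.Prime)
    (D : ℕ)
    (n : ℕ) (hn : n = p * D)
    (s s₀ s₁ : ℕ) (hs : s = p * s₁ + s₀) (hs₀ : s₀ < p) :
    padicValNat p ((n + s).choose s) = padicValNat p ((D + s₁).choose s₁) := by
  rw [hn, hs, add_comm (p * s₁)]
  exact Nat.padicValNat_choose_mul_add_mul_add hp D s₁ hs₀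

theorem padicValNat_choose_reduction (p : ℕ) (hp : p.Prime)
    (D : ℕ) (hD : 0 < D) (hDp : Nat.gcd D p = 1)
    (n : ℕ) (hn : n = p * D)
    (s s₀ s₁ : ℕ) (hs : s = p * s₁ + s₀) (hs₀ : s₀ < p) (hs₁ : s₁ < p) :
    padicValNat p ((n + s).choose s) = padicValNat p ((D + s₁).choose s₁) :=
  padicValNat_choose_reduction_general p hp D n hn s s₀ s₁ hs hs₀
end
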